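/- If f = Σ_{k∈ℤ} α_k a_k where the a_k are L^p atoms with disjoint supports of measure 2^k (so ess sup|a_k| = 2^{-k/p}), only finitely many α_k are nonzero, and 1 ≤ p, q < ∞, then ‖f‖_{L^{p,q}} ≤ C(p,q) (Σ_k |α_k|^q)^{1/q} with constant independent of the number of terms. -/

import Mathlib

open MeasureTheory Filter Topology
open scoped ENNReal NNReal

noncomputable section

variable {X : Type*} [MeasurableSpace X]

/-- Decreasing rearrangement of `f`. -/
def rearr (μ : Measure X) (f : X → ℂ) (t : ℝ≥0∞) : ℝ≥0∞ :=
  sInf {σ : ℝ≥0∞ | μ {x | σ < (‖f x‖₊ : ℝ≥0∞)} ≤ t}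

/-- The Lorentz `L^{p,q}` norm. -/
def lorentzNorm (p q : ℝ) (μ : Measure X) (f : X → ℂ) : ℝ≥0∞ :=
  (∫⁻ t in Set.Ioi (0:ℝ),
      (ENNReal.ofReal t ^ (1/p) * rearr μ f (ENNReal.ofReal t)) ^ q / ENNReal.ofReal t) ^ (1/q)

/-! With `c k = ‖α k‖ 2^(-k/p)`, disjointness of the supports gives `‖f‖ ≤ c k` on the support
of `a k`. Hence `‖f‖ > sup_{j ≥ k} c j` only on the supports of the atoms of index `< k`, whose
total measure is at most `∑_{j < k} 2^j = 2^k`, so `f*(2^k) ≤ sup_{j ≥ k} c j`. Splitting the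
Lorentz integral over the dyadic intervals `[2^k, 2^(k+1))` bounds it by
`∑_k 2^((k+1)q/p) (sup_{j ≥ k} c j)^q ≤ ∑_k 2^((k+1)q/p) ∑_{j ≥ k} (c j)^q`, and summing the
geometric series in `k` first leaves `2^(q/p) (1 - 2^(-q/p))⁻¹ ∑_j ‖α j‖^q`. -/

open Set Function

namespace ENNReal

lemma tsum_indicator_Iic_zpow {w : ℝ≥0∞} (hw₀ : w ≠ 0) (hw : w ≠ ∞) (k : ℤ) :
    ∑' j : ℤ, (Iic k).indicator (w ^ ·) j = w ^ k * (1 - w⁻¹)⁻¹ := by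
  have hinj : Injective fun n : ℕ => k - n := fun m n h => by simpa using h
  have hsupp : support ((Iic k).indicator (w ^ ·)) ⊆ range fun n : ℕ => k - n := by
    intro j hj
    have hjk : j ∈ Iic k := support_indicator_subset hj
    exact ⟨(k - j).toNat, show k - ((k - j).toNat : ℤ) = j by simp only [mem_Iic] at hjk; omega⟩
  rw [← hinj.tsum_eq hsupp, ← ENNReal.tsum_geometric, ← ENNReal.tsum_mul_left]
  refine tsum_congr fun n => ?_
  rw [indicator_of_mem (by simp), sub_eq_add_neg, ENNReal.zpow_add hw₀ hw, ← ENNReal.inv_zpow',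
    zpow_natCast]

lemma tsum_indicator_Iio_two_zpow (k : ℤ) :
    ∑' j : ℤ, (Iio k).indicator ((2 : ℝ≥0∞) ^ ·) j = 2 ^ k := by
  rw [show Iio k = Iic (k - 1) by ext; simp only [mem_Iio, mem_Iic]; omega,
    tsum_indicator_Iic_zpow two_ne_zero ofNat_ne_top, one_sub_inv_two, inv_inv,
    ENNReal.zpow_sub two_ne_zero ofNat_ne_top, zpow_one, mul_assoc,
    ENNReal.inv_mul_cancel two_ne_zero ofNat_ne_top, mul_one]

lemma tsum_zpow_mul_tsum_indicator_Ici {w : ℝ≥0∞} (hw₀ : w ≠ 0) (hw : w ≠ ∞) (d : ℤ → ℝ≥0∞) :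
    ∑' k : ℤ, w ^ k * ∑' j, (Ici k).indicator d j = (1 - w⁻¹)⁻¹ * ∑' j, w ^ j * d j := by
  calc ∑' k : ℤ, w ^ k * ∑' j, (Ici k).indicator d j
      = ∑' j, d j * ∑' k : ℤ, (Iic j).indicator (w ^ ·) k := by
        simp_rw [← ENNReal.tsum_mul_left]
        rw [ENNReal.tsum_comm]
        refine tsum_congr fun j => tsum_congr fun k => ?_
        by_cases h : k ≤ j <;> simp [indicator, h, mul_comm]
    _ = (1 - w⁻¹)⁻¹ * ∑' j, w ^ j * d j := by
        simp_rw [tsum_indicator_Iic_zpow hw₀ hw, ← ENNReal.tsum_mul_left]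
        exact tsum_congr fun j => by ring

lemma iSup_mem_rpow_le_tsum_indicator {ι : Type*} {q : ℝ} (hq : 0 < q) (c : ι → ℝ≥0∞)
    (s : Set ι) : (⨆ j ∈ s, c j) ^ q ≤ ∑' j, s.indicator (c · ^ q) j := by
  rw [← orderIsoRpow_apply q hq, OrderIso.map_iSup₂]
  exact iSup₂_le fun j hj => by
    simpa [indicator_of_mem hj] using ENNReal.le_tsum (f := s.indicator (c · ^ q)) j

lemma tsum_zpow_mul_iSup_Ici_rpow_le {w : ℝ≥0∞} (hw₀ : w ≠ 0) (hw : w ≠ ∞) {q : ℝ} (hq : 0 < q)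
    (c : ℤ → ℝ≥0∞) :
    ∑' k : ℤ, w ^ k * (⨆ j ≥ k, c j) ^ q ≤ (1 - w⁻¹)⁻¹ * ∑' j, w ^ j * c j ^ q := by
  rw [← tsum_zpow_mul_tsum_indicator_Ici hw₀ hw]
  exact ENNReal.tsum_le_tsum fun k => by
    gcongr
    exact iSup_mem_rpow_le_tsum_indicator hq c (Ici k)

lemma ofReal_zpow {x : ℝ} (hx : 0 < x) (k : ℤ) : ENNReal.ofReal (x ^ k) = ENNReal.ofReal x ^ k := by
  rw [← Real.rpow_intCast, ← ENNReal.ofReal_rpow_of_pos hx, ENNReal.rpow_intCast]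

end ENNReal

lemma setLIntegral_Ioi_zero_le_tsum_Ico_zpow {b : ℝ} (hb : 1 < b) (φ : ℝ → ℝ≥0∞) :
    ∫⁻ t in Ioi 0, φ t ≤ ∑' k : ℤ, ∫⁻ t in Ico (b ^ k) (b ^ (k + 1)), φ t :=
  calc ∫⁻ t in Ioi 0, φ t ≤ ∫⁻ t in ⋃ k : ℤ, Ico (b ^ k) (b ^ (k + 1)), φ t :=
        lintegral_mono_set fun _ ht => mem_iUnion.2 (exists_mem_Ico_zpow ht hb)
    _ ≤ _ := lintegral_iUnion_le _ _

lemma exists_lt_nnnorm_of_lt_nnnorm_tsum {ι Y 𝕜 : Type*} [NormedDivisionRing 𝕜] {α : ι → 𝕜}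
    {a : ι → Y → 𝕜} (hdisj : Pairwise fun k l => Disjoint (support (a k)) (support (a l)))
    {x : Y} {s : ℝ≥0∞} (hs : s < ‖∑' k, α k * a k x‖₊) :
    ∃ k, α k ≠ 0 ∧ x ∈ support (a k) ∧ s < ‖α k‖₊ * ‖a k x‖₊ := by
  have hne : ∑' k, α k * a k x ≠ 0 := by
    rintro h
    simp [h] at hs
  obtain ⟨k, hk⟩ : ∃ k, α k * a k x ≠ 0 := by
    by_contra! h
    simp [h] at hne
  have hx : x ∈ support (a k) := right_ne_zero_of_mul hk
  rw [tsum_eq_single k fun l hl => by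
    rw [notMem_support.1 (disjoint_right.1 (hdisj hl) hx), mul_zero]] at hs
  exact ⟨k, left_ne_zero_of_mul hk, hx, by simpa using hs⟩

lemma measure_lt_nnnorm_tsum_le {ι 𝕜 : Type*} [Countable ι] [NormedDivisionRing 𝕜]
    {μ : Measure X} {α : ι → 𝕜} {a : ι → X → 𝕜} {b : ι → ℝ≥0∞}
    (hbound : ∀ k, α k ≠ 0 → ∀ᵐ x ∂μ, (‖a k x‖₊ : ℝ≥0∞) ≤ b k)
    (hdisj : Pairwise fun k l => Disjoint (support (a k)) (support (a l))) (s : ℝ≥0∞) :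
    μ {x | s < ‖∑' k, α k * a k x‖₊} ≤
      ∑' k, {k | α k ≠ 0 ∧ s < ‖α k‖₊ * b k}.indicator (fun k => μ (support (a k))) k := by
  set I := {k | α k ≠ 0 ∧ s < ‖α k‖₊ * b k}
  have hbound' : ∀ᵐ x ∂μ, ∀ k, α k ≠ 0 → (‖a k x‖₊ : ℝ≥0∞) ≤ b k :=
    ae_all_iff.2 fun k => eventually_imp_distrib_left.2 (hbound k)
  calc μ {x | s < ‖∑' k, α k * a k x‖₊} ≤ μ (⋃ k ∈ I, support (a k)) := by
        refine measure_mono_ae (hbound'.mono fun x hx hs => ?_)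
        obtain ⟨k, hk, hxk, hlt⟩ := exists_lt_nnnorm_of_lt_nnnorm_tsum hdisj hs
        exact mem_biUnion ⟨hk, hlt.trans_le (by gcongr; exact hx k hk)⟩ hxk
    _ ≤ ∑' k : I, μ (support (a k)) := measure_biUnion_le μ I.to_countable _
    _ = _ := tsum_subtype I fun k => μ (support (a k))

lemma rearr_le_of_measure_le {μ : Measure X} {f : X → ℂ} {s t : ℝ≥0∞}
    (h : μ {x | s < ‖f x‖₊} ≤ t) : rearr μ f t ≤ s :=
  sInf_le h

lemma rearr_antitone (μ : Measure X) (f : X → ℂ) : Antitone (rearr μ f) :=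
  fun _ _ h => sInf_le_sInf fun _ hs => le_trans hs h

lemma rearr_two_zpow_le_iSup {μ : Measure X} {α : ℤ → ℂ} {a : ℤ → X → ℂ} {b : ℤ → ℝ≥0∞}
    (hsize : ∀ k, α k ≠ 0 → μ (support (a k)) = 2 ^ k)
    (hbound : ∀ k, α k ≠ 0 → ∀ᵐ x ∂μ, (‖a k x‖₊ : ℝ≥0∞) ≤ b k)
    (hdisj : Pairwise fun k l => Disjoint (support (a k)) (support (a l))) (k₀ : ℤ) :
    rearr μ (fun x => ∑' k, α k * a k x) (2 ^ k₀) ≤ ⨆ k ≥ k₀, ‖α k‖₊ * b k := by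
  refine rearr_le_of_measure_le ((measure_lt_nnnorm_tsum_le hbound hdisj _).trans ?_)
  rw [← ENNReal.tsum_indicator_Iio_two_zpow k₀]
  refine ENNReal.tsum_le_tsum fun k => indicator_le (fun j hj => ?_) k
  obtain ⟨hj, hlt⟩ := hj
  have hj₀ : j ∈ Iio k₀ :=
    not_le.1 fun h => (le_iSup₂ (f := fun k (_ : k ≥ k₀) => (‖α k‖₊ : ℝ≥0∞) * b k) j h).not_gt hlt
  rw [hsize j hj, indicator_of_mem hj₀]

def lorentzIntegrand (p q : ℝ) (μ : Measure X) (f : X → ℂ) (t : ℝ) : ℝ≥0∞ :=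
  (ENNReal.ofReal t ^ (1 / p) * rearr μ f (ENNReal.ofReal t)) ^ q / ENNReal.ofReal t

lemma lorentzNorm_eq_lintegral (p q : ℝ) (μ : Measure X) (f : X → ℂ) :
    lorentzNorm p q μ f = (∫⁻ t in Ioi 0, lorentzIntegrand p q μ f t) ^ (1 / q) :=
  rfl

lemma setLIntegral_Ico_two_zpow_lorentzIntegrand_le {p q : ℝ} (hp : 0 ≤ p) (hq : 0 ≤ q)
    (μ : Measure X) (f : X → ℂ) (k : ℤ) :
    ∫⁻ t in Ico ((2 : ℝ) ^ k) (2 ^ (k + 1)), lorentzIntegrand p q μ f t ≤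
      (2 ^ (k + 1) : ℝ≥0∞) ^ (q / p) * rearr μ f (2 ^ k) ^ q := by
  set B := ((2 ^ (k + 1) : ℝ≥0∞) ^ (1 / p) * rearr μ f (2 ^ k)) ^ q with hB
  calc ∫⁻ t in Ico ((2 : ℝ) ^ k) (2 ^ (k + 1)), lorentzIntegrand p q μ f t
      ≤ ∫⁻ _ in Ico ((2 : ℝ) ^ k) (2 ^ (k + 1)), B / 2 ^ k := by
        refine setLIntegral_mono measurable_const fun t ⟨ht₁, ht₂⟩ => ?_
        have ht₁' : 2 ^ k ≤ ENNReal.ofReal t := by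
          simpa [ENNReal.ofReal_zpow two_pos] using ENNReal.ofReal_le_ofReal ht₁
        have ht₂' : ENNReal.ofReal t ≤ 2 ^ (k + 1) := by
          simpa [ENNReal.ofReal_zpow two_pos] using ENNReal.ofReal_le_ofReal ht₂.le
        refine ENNReal.div_le_div (ENNReal.rpow_le_rpow ?_ hq) ht₁'
        exact mul_le_mul' (ENNReal.rpow_le_rpow ht₂' (by positivity)) (rearr_antitone μ f ht₁')
    _ = B := by
        rw [setLIntegral_const, Real.volume_Ico, zpow_add_one₀ two_ne_zero,
          show (2 : ℝ) ^ k * 2 - 2 ^ k = 2 ^ k by ring, ENNReal.ofReal_zpow two_pos,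
          ENNReal.ofReal_ofNat,
          ENNReal.div_mul_cancel (ENNReal.zpow_pos two_ne_zero ENNReal.ofNat_ne_top k).ne'
            (ENNReal.zpow_ne_top two_ne_zero ENNReal.ofNat_ne_top k)]
    _ = _ := by
        rw [hB, ENNReal.mul_rpow_of_nonneg _ _ hq, ← ENNReal.rpow_mul, one_div_mul_eq_div]

lemma lintegral_lorentzIntegrand_le {p q : ℝ} (hp : 0 ≤ p) (hq : 0 < q) {μ : Measure X}
    {f : X → ℂ} {c : ℤ → ℝ≥0∞} (hf : ∀ k, rearr μ f (2 ^ k) ≤ ⨆ j ≥ k, c j) :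
    ∫⁻ t in Ioi 0, lorentzIntegrand p q μ f t ≤
      2 ^ (q / p) * (1 - (2 ^ (q / p))⁻¹)⁻¹ * ∑' j, ((2 : ℝ≥0∞) ^ (q / p)) ^ j * c j ^ q := by
  set w : ℝ≥0∞ := 2 ^ (q / p)
  have hw₀ : w ≠ 0 := (ENNReal.rpow_pos two_pos ENNReal.ofNat_ne_top).ne'
  have hw : w ≠ ∞ := ENNReal.rpow_ne_top_of_nonneg (by positivity) ENNReal.ofNat_ne_top
  have hpow (k : ℤ) : (2 ^ (k + 1) : ℝ≥0∞) ^ (q / p) = w * w ^ k := by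
    rw [← ENNReal.rpow_intCast_mul, mul_comm, ENNReal.rpow_mul_intCast, ENNReal.zpow_add hw₀ hw,
      zpow_one, mul_comm]
  calc ∫⁻ t in Ioi 0, lorentzIntegrand p q μ f t
      ≤ ∑' k : ℤ, ∫⁻ t in Ico ((2 : ℝ) ^ k) (2 ^ (k + 1)), lorentzIntegrand p q μ f t :=
        setLIntegral_Ioi_zero_le_tsum_Ico_zpow one_lt_two _
    _ ≤ ∑' k : ℤ, w * (w ^ k * (⨆ j ≥ k, c j) ^ q) := ENNReal.tsum_le_tsum fun k => by
        refine (setLIntegral_Ico_two_zpow_lorentzIntegrand_le hp hq.le μ f k).trans ?_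
        rw [hpow, mul_assoc]
        gcongr
        exact hf k
    _ ≤ w * ((1 - w⁻¹)⁻¹ * ∑' j, w ^ j * c j ^ q) := by
        rw [ENNReal.tsum_mul_left]
        gcongr
        exact ENNReal.tsum_zpow_mul_iSup_Ici_rpow_le hw₀ hw hq c
    _ = _ := (mul_assoc ..).symm

/-- if `f = Σ_k α_k a_k` with `a_k` `L^p` atoms with disjoint
supports of measure `2^k` (so `|a_k| ≤ 2^{-k/p}`) and only finitely many
`α_k ≠ 0`, then `‖f‖_{L^{p,q}} ≤ C(p,q) (Σ_k |α_k|^q)^{1/q}`, with constant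
independent of the number of terms. -/
theorem lorentz_norm_of_atomic_sum {X : Type*} [MeasurableSpace X]
    (p q : ℝ) (hp : 1 ≤ p) (hq : 1 ≤ q) :
    ∃ C : ℝ≥0∞, C ≠ ⊤ ∧
      ∀ (μ : Measure X) (α : ℤ → ℂ) (a : ℤ → X → ℂ),
        (Function.support α).Finite →
        (∀ k, Measurable (a k)) →
        (∀ k, α k ≠ 0 → μ (Function.support (a k)) = (2:ℝ≥0∞) ^ k) →
        (∀ k, α k ≠ 0 → ∀ᵐ x ∂μ, ‖a k x‖ ≤ (2:ℝ) ^ (-(k:ℝ) / p)) →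
        (Pairwise fun k l => Disjoint (Function.support (a k)) (Function.support (a l))) →
        lorentzNorm p q μ (fun x => ∑' k : ℤ, α k * a k x) ≤
          C * (∑' k : ℤ, (‖α k‖₊ : ℝ≥0∞) ^ q) ^ (1/q) := by
  have hp₀ : 0 < p := by linarith
  have hq₀ : 0 < q := by linarith
  set w : ℝ≥0∞ := 2 ^ (q / p)
  have hw : 1 < w := ENNReal.one_lt_rpow ENNReal.one_lt_two (div_pos hq₀ hp₀)
  refine ⟨(w * (1 - w⁻¹)⁻¹) ^ (1 / q), ?_, fun μ α a _ _ hsize hbound hdisj => ?_⟩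
  · have : (1 - w⁻¹)⁻¹ ≠ ∞ := ENNReal.inv_ne_top.2 (tsub_pos_of_lt (ENNReal.inv_lt_one.2 hw)).ne'
    exact ENNReal.rpow_ne_top_of_nonneg (by positivity) (ENNReal.mul_ne_top
      (ENNReal.rpow_ne_top_of_nonneg (by positivity) ENNReal.ofNat_ne_top) this)
  have hbound' (k : ℤ) (hk : α k ≠ 0) : ∀ᵐ x ∂μ, (‖a k x‖₊ : ℝ≥0∞) ≤ 2 ^ (-(k : ℝ) / p) :=
    (hbound k hk).mono fun x hx => by
      rw [← enorm_eq_nnnorm]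
      simpa [← ENNReal.ofReal_rpow_of_pos two_pos] using ENNReal.ofReal_le_ofReal hx
  have hweight (j : ℤ) : w ^ j * (‖α j‖₊ * 2 ^ (-(j : ℝ) / p)) ^ q = (‖α j‖₊ : ℝ≥0∞) ^ q := by
    rw [ENNReal.mul_rpow_of_nonneg _ _ hq₀.le, ← ENNReal.rpow_mul, ← ENNReal.rpow_mul_intCast,
      mul_left_comm, ← ENNReal.rpow_add _ _ two_ne_zero ENNReal.ofNat_ne_top,
      show q / p * j + -j / p * q = 0 by ring, ENNReal.rpow_zero, mul_one]
  rw [lorentzNorm_eq_lintegral]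
  calc (∫⁻ t in Ioi 0, lorentzIntegrand p q μ (fun x => ∑' k, α k * a k x) t) ^ (1 / q)
      ≤ (w * (1 - w⁻¹)⁻¹ * ∑' j, w ^ j * (‖α j‖₊ * 2 ^ (-(j : ℝ) / p)) ^ q) ^ (1 / q) :=
        ENNReal.rpow_le_rpow (lintegral_lorentzIntegrand_le hp₀.le hq₀
          (rearr_two_zpow_le_iSup hsize hbound' hdisj)) (by positivity)
    _ = _ := by
        simp_rw [hweight]
        rw [ENNReal.mul_rpow_of_nonneg _ _ (by positivity)]
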